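/- arXiv:2511.10961 — 2 statements merged into one kernel-verified Lean document; each statement's English description precedes it below -/
import Mathlib

section
/- Let B be a sum of m_j (possibly dependent) indicator random variables, each with expectation at most p_j, where p_j ≤ ((2/3)·m_j)^{-α} for some α > 0 and m_j > 0. Then Pr[B ≥ (3/2)^α · m_j^{1 - α/2}] ≤ m_j^{-α/2}. -/
open MeasureTheory

/-- Lemma 5.2 (few bad buckets in one epoch).  Let `B = ∑ i Y i` be a sum of `mj`
(possibly dependent) indicator random variables, each with expectation at most `pj`,
where `pj ≤ ((2/3)·mj)^{-α}` for some `α > 0`.  Then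
`Pr[B ≥ (3/2)^α · mj^{1-α/2}] ≤ mj^{-α/2}`. -/
theorem stmt_4 {Ω : Type*} [MeasurableSpace Ω] (P : Measure Ω) [IsProbabilityMeasure P]
    (mj : ℕ) (hmj : 0 < mj) (α pj : ℝ) (hα : 0 < α)
    (hpj : pj ≤ (2 / 3 * (mj : ℝ)) ^ (-α))
    (Y : Fin mj → Ω → ℝ)
    (hind : ∀ i, ∀ ω, Y i ω = 0 ∨ Y i ω = 1)
    (hmeas : ∀ i, Measurable (Y i))
    (hexp : ∀ i, ∫ ω, Y i ω ∂P ≤ pj) :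
    P {ω | (3 / 2 : ℝ) ^ α * (mj : ℝ) ^ (1 - α / 2) ≤ ∑ i, Y i ω} ≤
      ENNReal.ofReal ((mj : ℝ) ^ (-(α / 2))) := by
  have hmjR : (0 : ℝ) < mj := Nat.cast_pos.mpr hmj
  -- each Y i is integrable
  have hYint : ∀ i, Integrable (Y i) P := by
    intro i
    refine (integrable_const (1 : ℝ)).mono (hmeas i).aestronglyMeasurable ?_
    filter_upwards with ω
    rcases hind i ω with h | h <;> simp [h]
  have hBint : Integrable (fun ω => ∑ i, Y i ω) P :=
    integrable_finset_sum _ fun i _ => hYint i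
  have hBnonneg : (0 : Ω → ℝ) ≤ fun ω => ∑ i, Y i ω := by
    intro ω
    apply Finset.sum_nonneg
    intro i _
    rcases hind i ω with h | h <;> simp [h]
  set ε : ℝ := (3 / 2 : ℝ) ^ α * (mj : ℝ) ^ (1 - α / 2) with hε
  have hεpos : 0 < ε :=
    mul_pos (Real.rpow_pos_of_pos (by norm_num) α) (Real.rpow_pos_of_pos hmjR _)
  have markov := mul_meas_ge_le_integral_of_nonneg
    (Filter.Eventually.of_forall hBnonneg) hBint ε
  have hEB : ∫ ω, (∑ i, Y i ω) ∂P ≤ (mj : ℝ) * pj := by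
    rw [integral_finset_sum _ fun i _ => hYint i]
    calc ∑ i, ∫ ω, Y i ω ∂P ≤ ∑ _i : Fin mj, pj :=
          Finset.sum_le_sum fun i _ => hexp i
      _ = (mj : ℝ) * pj := by simp [mul_comm]
  have hbound : (mj : ℝ) * pj ≤ (3 / 2 : ℝ) ^ α * (mj : ℝ) ^ (1 - α) := by
    calc (mj : ℝ) * pj ≤ (mj : ℝ) * (2 / 3 * (mj : ℝ)) ^ (-α) := by
          exact mul_le_mul_of_nonneg_left hpj hmjR.le
      _ = (3 / 2 : ℝ) ^ α * (mj : ℝ) ^ (1 - α) := by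
          rw [Real.mul_rpow (by norm_num) hmjR.le,
            Real.rpow_neg (by norm_num : (0:ℝ) ≤ 2/3),
            ← Real.inv_rpow (by norm_num : (0:ℝ) ≤ 2/3),
            show ((2:ℝ)/3)⁻¹ = (3:ℝ)/2 by norm_num,
            Real.rpow_sub hmjR, Real.rpow_one, Real.rpow_neg hmjR.le]
          ring
  have key : (P {ω | ε ≤ ∑ i, Y i ω}).toReal ≤ (mj : ℝ) ^ (-(α / 2)) := by
    rw [← le_div_iff₀' hεpos] at markov
    refine markov.trans ?_
    rw [div_le_iff₀ hεpos]
    calc ∫ ω, (∑ i, Y i ω) ∂P ≤ (3 / 2 : ℝ) ^ α * (mj : ℝ) ^ (1 - α) :=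
          hEB.trans hbound
      _ = (mj : ℝ) ^ (-(α / 2)) * ε := by
          rw [hε, ← mul_assoc, mul_comm ((mj:ℝ) ^ (-(α/2))), mul_assoc,
            ← Real.rpow_add hmjR]
          ring_nf
  have hlt : P {ω | ε ≤ ∑ i, Y i ω} ≠ ⊤ := measure_ne_top P _
  calc P {ω | ε ≤ ∑ i, Y i ω}
      = ENNReal.ofReal (P {ω | ε ≤ ∑ i, Y i ω}).toReal := (ENNReal.ofReal_toReal hlt).symm
    _ ≤ ENNReal.ofReal ((mj : ℝ) ^ (-(α / 2))) := ENNReal.ofReal_le_ofReal key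
end

section
/- Suppose a BFS is run from a root r in a connected graph G with n ≥ 2 vertices, and let e = (u,v) be the first non-tree (cross) edge encountered. Then the cycle formed by e together with the tree paths from u and v to their lowest common ancestor has length at most 2·⌈log₂ n⌉ + 1, provided every vertex of G has degree at least 3. -/
/-!
Let `d` be the larger BFS level of an endpoint of the first cross edge. Every edge at a vertex of
level `k ≤ d - 2` is a tree edge, so such a vertex has at least `3 - 1 = 2` children (only one
neighbour, its parent, lies one level up). Hence level `d - 1` of the tree has at least
`2 ^ (d - 1)` vertices and misses the root, which forces `d ≤ ⌈log₂ n⌉`. The fundamental cycle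
is the cross edge plus the tree path between its endpoints, of length at most `2 d + 1`.
-/

open Finset SimpleGraph

namespace SimpleGraph

variable {V : Type*} {G T : SimpleGraph V}

lemma IsTree.eq_of_adj_of_dist_add_one_eq (hT : T.IsTree) (r : V) {x a b : V}
    (ha : T.Adj x a) (hb : T.Adj x b)
    (hda : T.dist r a + 1 = T.dist r x) (hdb : T.dist r b + 1 = T.dist r x) : a = b := by
  obtain ⟨p, -, hp⟩ := hT.connected.exists_path_of_dist a r
  obtain ⟨q, -, hq⟩ := hT.connected.exists_path_of_dist b r
  have hpa : (p.cons ha).IsPath := (p.cons ha).isPath_of_length_eq_dist <| by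
    rw [Walk.length_cons, hp, dist_comm, hda, dist_comm]
  have hqb : (q.cons hb).IsPath := (q.cons hb).isPath_of_length_eq_dist <| by
    rw [Walk.length_cons, hq, dist_comm, hdb, dist_comm]
  simpa using congrArg (fun P : T.Path x r => P.1.snd)
    ((hT.isAcyclic.subsingleton_path x r).elim ⟨_, hpa⟩ ⟨_, hqb⟩)

lemma IsTree.exists_isCycle_of_not_adj (hT : T.IsTree) (hTG : T ≤ G) {u v : V}
    (huv : G.Adj u v) (hnt : ¬ T.Adj u v) :
    ∃ C : G.Walk u u, C.IsCycle ∧ s(u, v) ∈ C.edges ∧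
      (∀ f ∈ C.edges, f ≠ s(u, v) → f ∈ T.edgeSet) ∧ C.length = T.dist v u + 1 := by
  obtain ⟨p, hp, hlen⟩ := hT.connected.exists_path_of_dist v u
  have hpT : ∀ f ∈ p.edges, f ∈ T.edgeSet := fun f hf => p.edges_subset_edgeSet hf
  refine ⟨.cons huv (p.mapLe hTG), ?_, by simp, ?_, by simp [hlen]⟩
  · rw [Walk.cons_isCycle_iff, Walk.edges_mapLe_eq_edges]
    exact ⟨hp.mapLe hTG, fun h => hnt (hpT _ h)⟩
  · intro f hf hne
    rw [Walk.edges_cons, Walk.edges_mapLe_eq_edges, List.mem_cons] at hf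
    exact hpT f (hf.resolve_left hne)

variable [Fintype V] [DecidableRel T.Adj]

lemma IsTree.degree_le_card_children_add_one (hT : T.IsTree) (r w : V) :
    T.degree w ≤ #{x | T.Adj w x ∧ T.dist r x = T.dist r w + 1} + 1 := by
  classical
  have hparent : #{x | T.Adj w x ∧ T.dist r x + 1 = T.dist r w} ≤ 1 :=
    card_le_one.2 fun a ha b hb => by
      simp only [mem_filter, mem_univ, true_and] at ha hb
      exact hT.eq_of_adj_of_dist_add_one_eq r ha.1 hb.1 ha.2 hb.2
  have hsplit : T.neighborFinset w ⊆ ({x | T.Adj w x ∧ T.dist r x = T.dist r w + 1} : Finset V) ∪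
      ({x | T.Adj w x ∧ T.dist r x + 1 = T.dist r w} : Finset V) := by
    intro x hx
    rw [mem_neighborFinset] at hx
    simp only [mem_union, mem_filter, mem_univ, true_and]
    rcases hT.dist_eq_dist_add_one_of_adj r hx with h | h
    · exact .inr ⟨hx, h.symm⟩
    · exact .inl ⟨hx, h⟩
  rw [← card_neighborFinset_eq_degree]
  have := (card_le_card hsplit).trans (card_union_le _ _)
  omega

lemma IsTree.mul_card_level_le (hT : T.IsTree) (r : V) {m k : ℕ}
    (h : ∀ w, T.dist r w = k → m ≤ #{x | T.Adj w x ∧ T.dist r x = k + 1}) :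
    m * #{w | T.dist r w = k} ≤ #{w | T.dist r w = k + 1} := by
  have := card_mul_le_card_mul T.Adj (s := {w | T.dist r w = k}) (t := {w | T.dist r w = k + 1})
    (m := m) (n := 1) (fun w hw => ?_) (fun x hx => card_le_one.2 fun a ha b hb => ?_)
  · simpa [mul_comm] using this
  · convert h w (mem_filter.1 hw).2 using 2
    ext x
    simp [bipartiteAbove, and_comm]
  · simp only [mem_bipartiteBelow, mem_filter, mem_univ, true_and] at hx ha hb
    exact hT.eq_of_adj_of_dist_add_one_eq r ha.2.symm hb.2.symm (by omega) (by omega)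

lemma IsTree.two_pow_le_card_level (hT : T.IsTree) (r : V) {K : ℕ}
    (h : ∀ k < K, ∀ w, T.dist r w = k → 2 ≤ #{x | T.Adj w x ∧ T.dist r x = k + 1}) :
    2 ^ K ≤ #{w | T.dist r w = K} := by
  induction K with
  | zero => exact card_pos.2 ⟨r, by simp⟩
  | succ K ih =>
    calc 2 ^ (K + 1) = 2 * 2 ^ K := by ring
      _ ≤ 2 * #{w | T.dist r w = K} := by gcongr; exact ih fun k hk => h k (by omega)
      _ ≤ #{w | T.dist r w = K + 1} := hT.mul_card_level_le r (h K K.lt_succ_self)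

lemma IsTree.le_clog_card (hT : T.IsTree) (r : V) (hn : 2 ≤ Fintype.card V) {d : ℕ}
    (h : ∀ k, k + 2 ≤ d → ∀ w, T.dist r w = k → 2 ≤ #{x | T.Adj w x ∧ T.dist r x = k + 1}) :
    d ≤ Nat.clog 2 (Fintype.card V) := by
  rcases Nat.lt_or_ge d 2 with hd | hd
  · exact (Nat.le_of_lt_succ hd).trans (Nat.clog_pos one_lt_two hn)
  obtain ⟨K, rfl⟩ := Nat.exists_eq_add_of_le' hd
  have hlevel : 2 ^ (K + 1) < Fintype.card V :=
    (hT.two_pow_le_card_level r fun k hk => h k (by omega)).trans_lt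
      (card_lt_univ_of_notMem (x := r) (by simp))
  exact (Nat.lt_clog_iff_pow_lt one_lt_two).2 hlevel

end SimpleGraph

theorem stmt_15_general {V : Type*} [Fintype V] (G : SimpleGraph V)
    [DecidableRel G.Adj] (hn : 2 ≤ Fintype.card V)
    (hdeg : ∀ w : V, 3 ≤ G.degree w)
    (r : V) (T : SimpleGraph V) (hTle : T ≤ G) (hTtree : T.IsTree)
    (hBFS : ∀ w : V, T.dist r w = G.dist r w)
    (u v : V) (huv : G.Adj u v) (hnt : ¬ T.Adj u v)
    (hfirst : ∀ a b : V, G.Adj a b → ¬ T.Adj a b →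
      max (G.dist r u) (G.dist r v) ≤ max (G.dist r a) (G.dist r b)) :
    ∃ C : G.Walk u u, C.IsCycle ∧ s(u, v) ∈ C.edges ∧
      (∀ f ∈ C.edges, f ≠ s(u, v) → f ∈ T.edgeSet) ∧
      C.length ≤ 2 * Nat.clog 2 (Fintype.card V) + 1 := by
  classical
  set d := max (G.dist r u) (G.dist r v)
  have htree_edge : ∀ w x, G.dist r w + 2 ≤ d → G.Adj w x → T.Adj w x := fun w x hw hwx =>
    by_contra fun hwx' => by
      have := hfirst w x hwx hwx'
      have := hwx.diff_dist_adj (u := r)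
      omega
  have hbranch : ∀ k, k + 2 ≤ d → ∀ w, T.dist r w = k →
      2 ≤ #{x | T.Adj w x ∧ T.dist r x = k + 1} := by
    rintro k hk w rfl
    have hGT : G.degree w ≤ T.degree w := by
      simp only [← card_neighborFinset_eq_degree]
      refine card_le_card fun x hx => ?_
      simp only [mem_neighborFinset] at hx ⊢
      exact htree_edge w x (by rw [← hBFS]; omega) hx
    have := hdeg w
    have := hTtree.degree_le_card_children_add_one r w
    omega
  have hdepth : d ≤ Nat.clog 2 (Fintype.card V) := hTtree.le_clog_card r hn hbranch
  obtain ⟨C, hC, huvC, hCT, hlen⟩ := hTtree.exists_isCycle_of_not_adj hTle huv hnt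
  refine ⟨C, hC, huvC, hCT, ?_⟩
  have : T.dist v u ≤ T.dist v r + T.dist r u := hTtree.connected.dist_triangle
  rw [dist_comm (u := v) (v := r), hBFS, hBFS] at this
  omega

/-- Short-cycle lemma for BFS (Lemma 4.3 of Kavitha et al., as used by Freedman–Hastings).
Run BFS from a root `r` in a connected graph `G` on `n ≥ 2` vertices in which every vertex
has degree at least 3; the BFS tree is modelled as a spanning tree `T ≤ G` preserving
distances from `r`.  If `(u,v)` is the first non-tree (cross) edge encountered (so every
cross edge appears no earlier in BFS order, i.e. at no smaller level), then the fundamental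
cycle of `(u,v)` — the edge together with the tree paths from `u` and `v` to their lowest
common ancestor — has length at most `2·⌈log₂ n⌉ + 1`. -/
theorem stmt_15 {V : Type*} [Fintype V] [DecidableEq V] (G : SimpleGraph V)
    [DecidableRel G.Adj] (hG : G.Connected) (hn : 2 ≤ Fintype.card V)
    (hdeg : ∀ w : V, 3 ≤ G.degree w)
    (r : V) (T : SimpleGraph V) (hTle : T ≤ G) (hTtree : T.IsTree)
    (hBFS : ∀ w : V, T.dist r w = G.dist r w)
    (u v : V) (huv : G.Adj u v) (hnt : ¬ T.Adj u v)
    (hfirst : ∀ a b : V, G.Adj a b → ¬ T.Adj a b →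
      max (G.dist r u) (G.dist r v) ≤ max (G.dist r a) (G.dist r b)) :
    ∃ C : G.Walk u u, C.IsCycle ∧ s(u, v) ∈ C.edges ∧
      (∀ f ∈ C.edges, f ≠ s(u, v) → f ∈ T.edgeSet) ∧
      C.length ≤ 2 * Nat.clog 2 (Fintype.card V) + 1 :=
  stmt_15_general G hn hdeg r T hTle hTtree hBFS u v huv hnt hfirst
end
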